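/- With ψ̃_m^{(2)} as defined, the ratio ψ̃_m^{(2)}(m,1)/ψ̃_m^{(2)}(m,0) = (n_2 − m(n_1−m+1))/n_2, whenever n_2 ≥ m ≥ 1. -/

import Mathlib

/-- Rising factorial (Pochhammer symbol) `(a)_j = a(a+1)⋯(a+j-1)`. -/
def poch (a : ℚ) (j : ℕ) : ℚ := ∏ i ∈ Finset.range j, (a + i)

/-- The two-variable Hahn polynomial factor `ψ̃ₘ⁽²⁾(u,v)`. -/
def psi2 (n1 n2 m u v : ℕ) : ℚ :=
  ∑ i ∈ Finset.range (m + 1),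
    poch (-(m : ℚ)) i / (Nat.factorial i : ℚ) *
      poch ((n1 : ℚ) - m + 1) i * poch ((n2 : ℚ) - m + 1) (m - i) *
      poch (-(v : ℚ)) i * poch (-(u : ℚ)) (m - i)

/-!
Since `(-v)_i` vanishes for `i > v`, only the term `i = 0` of `ψ̃ₘ⁽²⁾(m,0)` and the terms
`i = 0, 1` of `ψ̃ₘ⁽²⁾(m,1)` survive. All of them carry the common factor
`(n₂-m+1)_{m-1} (-m)_{m-1}`, which is nonzero because `n₂ ≥ m`, and the last factors of
`(n₂-m+1)_m` and `(-m)_m` are `n₂` and `-1`; so the ratio is `1 - m(n₁-m+1)/n₂`.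
-/

lemma poch_eq_eval_ascPochhammer (a : ℚ) (j : ℕ) : poch a j = (ascPochhammer ℚ j).eval a := by
  induction j with
  | zero => simp [poch]
  | succ j ih => rw [poch, Finset.prod_range_succ, ← poch, ih, ascPochhammer_succ_eval]

@[simp]
lemma poch_zero (a : ℚ) : poch a 0 = 1 := by
  simp [poch]

@[simp]
lemma poch_one (a : ℚ) : poch a 1 = a := by
  simp [poch]

lemma poch_succ (a : ℚ) (j : ℕ) : poch a (j + 1) = poch a j * (a + j) := by
  simp only [poch_eq_eval_ascPochhammer, ascPochhammer_succ_eval]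

lemma poch_eq_mul_pred (a : ℚ) {j : ℕ} (hj : 1 ≤ j) :
    poch a j = poch a (j - 1) * (a + j - 1) := by
  obtain ⟨k, rfl⟩ : ∃ k, j = k + 1 := ⟨j - 1, by omega⟩
  rw [poch_succ, Nat.add_sub_cancel]
  push_cast
  ring

lemma poch_pos {a : ℚ} (ha : 0 < a) (j : ℕ) : 0 < poch a j := by
  rw [poch_eq_eval_ascPochhammer]
  exact ascPochhammer_pos j a ha

lemma poch_neg_natCast_of_lt {k j : ℕ} (h : k < j) : poch (-(k : ℚ)) j = 0 := by
  rw [poch_eq_eval_ascPochhammer, ascPochhammer_eval_neg_coe_nat_of_lt h]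

lemma poch_neg_natCast_ne_zero {k j : ℕ} (h : j ≤ k) : poch (-(k : ℚ)) j ≠ 0 := by
  rw [poch_eq_eval_ascPochhammer, Ne, ascPochhammer_eval_eq_zero_iff]
  rintro ⟨i, hij, hik⟩
  rw [neg_neg, Nat.cast_inj] at hik
  omega

lemma psi2_zero_right (n1 n2 m u : ℕ) :
    psi2 n1 n2 m u 0 = poch ((n2 : ℚ) - m + 1) m * poch (-(u : ℚ)) m := by
  rw [psi2, Finset.sum_eq_single 0]
  · simp
  · intro i _ hi
    rw [poch_neg_natCast_of_lt (Nat.pos_of_ne_zero hi)]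
    ring
  · simp

lemma psi2_one_right (n1 n2 m u : ℕ) :
    psi2 n1 n2 m u 1 = poch ((n2 : ℚ) - m + 1) m * poch (-(u : ℚ)) m +
      m * ((n1 : ℚ) - m + 1) * poch ((n2 : ℚ) - m + 1) (m - 1) * poch (-(u : ℚ)) (m - 1) := by
  cases m with
  | zero => simp [psi2]
  | succ k =>
    rw [psi2, Finset.sum_range_succ', Finset.sum_range_succ', Finset.sum_eq_zero]
    · simp only [Nat.cast_add, Nat.cast_one, neg_add_rev, zero_add, poch_zero, poch_one,
        Nat.factorial_zero, Nat.factorial_one, Nat.cast_one, div_one, div_self one_ne_zero,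
        add_tsub_cancel_right, tsub_zero]
      ring
    · intro i _
      rw [poch_neg_natCast_of_lt (by omega : 1 < i + 1 + 1)]
      ring

theorem psi2_m_one_ratio (n1 n2 m : ℕ) (hm : 1 ≤ m) (hn2 : m ≤ n2) :
    psi2 n1 n2 m m 1 / psi2 n1 n2 m m 0 =
      ((n2 : ℚ) - m * ((n1 : ℚ) - m + 1)) / (n2 : ℚ) := by
  have hmn2 : (m : ℚ) ≤ n2 := by exact_mod_cast hn2
  have hn2_ne : (n2 : ℚ) ≠ 0 := by exact_mod_cast (by omega : n2 ≠ 0)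
  set A := poch ((n2 : ℚ) - m + 1) (m - 1)
  set B := poch (-(m : ℚ)) (m - 1)
  have hA : A ≠ 0 := (poch_pos (by linarith) _).ne'
  have hB : B ≠ 0 := poch_neg_natCast_ne_zero (Nat.sub_le m 1)
  have hA_pred : poch ((n2 : ℚ) - m + 1) m = A * n2 := by
    rw [poch_eq_mul_pred _ hm]; ring
  have hB_pred : poch (-(m : ℚ)) m = -B := by
    rw [poch_eq_mul_pred _ hm]; ring
  have h0 : psi2 n1 n2 m m 0 = -(n2 * A * B) := by
    rw [psi2_zero_right, hA_pred, hB_pred]; ring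
  have h1 : psi2 n1 n2 m m 1 = -(n2 * A * B) + m * ((n1 : ℚ) - m + 1) * A * B := by
    rw [psi2_one_right, hA_pred, hB_pred]
    ring
  rw [h0, h1, div_eq_div_iff (by simp [hA, hB, hn2_ne]) hn2_ne]
  ring
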